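/- arXiv:2504.20623 — 3 statements merged into one kernel-verified Lean document; each statement's English description precedes it below -/
import Mathlib

section
/- Consider the signal channel model with parameters N, K, σ, μ, r₀, α. For every 1 ≤ k ≤ K, one has E[|g₀|² |g_k|²] = r₀^{−2α} σ⁴ (N μ² + N²), E[|g₀|²] = E[|g_k|²] = r₀^{−α} N σ², and Var[|g₀|²] = Var[|g_k|²] = r₀^{−2α} N σ⁴. -/
/-!
For `j = (n, b)` running over the `2N` real and imaginary parts, let `X_j = Z (n, 0, b)`,
`Y_j = Z (n, k, b)` and `U_j = √(1 - μ²) Y_j + μ X_j`. Then `|g₀|² = r₀^{-α} σ² Σ_j X_j²` and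
`|g_k|² = r₀^{-α} σ² Σ_j U_j²`. All of `X_j`, `Y_j`, `U_j` are `N(0, 1/2)`, and the pairs
`(X_j, Y_j)` are independent across `j`, so in `E[(Σ_j A_j)(Σ_j B_j)]` only the `2N` diagonal
terms differ from `E A_j · E B_j`. These are Gaussian fourth moments: `E X⁴ = 3v²` for
`X ~ N(0, v)`, computed through the Gamma function, and `E[X_j² U_j²] = (1 + 2μ²)/4`, which is
the only place where the correlation `μ` enters.
-/

open MeasureTheory ProbabilityTheory Real Set
open scoped NNReal

lemma integral_pow_four_mul_exp_neg_mul_sq {b : ℝ} (hb : 0 < b) :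
    ∫ x : ℝ, x ^ 4 * exp (-b * x ^ 2) = 3 * √π / (4 * b ^ 2 * √b) := by
  have habs := integral_comp_abs (f := fun x : ℝ => x ^ 4 * exp (-b * x ^ 2))
  simp only [(show Even 4 by decide).pow_abs, sq_abs] at habs
  rw [habs]
  have hI := integral_rpow_mul_exp_neg_mul_rpow (p := 2) (q := 4) two_pos (by norm_num) hb
  have h2 : ∀ x : ℝ, x ^ (2 : ℝ) = x ^ 2 := fun x => rpow_two x
  have h4 : ∀ x : ℝ, x ^ (4 : ℝ) = x ^ 4 := fun x => by exact_mod_cast rpow_natCast x 4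
  simp only [h2, h4] at hI
  have hb52 : b ^ (-(4 + 1) / 2 : ℝ) = (b ^ 2 * √b)⁻¹ := by
    rw [show (-(4 + 1) / 2 : ℝ) = -(2 + 1 / 2) by norm_num, rpow_neg hb.le, rpow_add hb,
      rpow_two, sqrt_eq_rpow]
  rw [hI, hb52, show ((4 : ℝ) + 1) / 2 = 1 / 2 + 1 + 1 by norm_num, Gamma_add_one (by norm_num),
    Gamma_add_one (by norm_num), Gamma_one_half_eq]
  field_simp
  ring

namespace ProbabilityTheory

lemma integrable_pow_gaussianReal (m : ℝ) (v : ℝ≥0) (n : ℕ) :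
    Integrable (fun x => x ^ n) (gaussianReal m v) :=
  integrable_pow_of_mem_interior_integrableExpSet (X := id) (by simp) n

lemma integral_sq_gaussianReal (v : ℝ≥0) : ∫ x, x ^ 2 ∂gaussianReal 0 v = v := by
  simpa [variance_eq_integral measurable_id'.aemeasurable] using
    variance_fun_id_gaussianReal (μ := 0) (v := v)

lemma integral_pow_four_gaussianReal (v : ℝ≥0) :
    ∫ x, x ^ 4 ∂gaussianReal 0 v = 3 * (v : ℝ) ^ 2 := by
  rcases eq_or_ne v 0 with rfl | hv
  · simp
  rw [integral_gaussianReal_eq_integral_smul hv]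
  calc _ = (√(2 * π * v))⁻¹ * ∫ x : ℝ, x ^ 4 * exp (-(2 * (v : ℝ))⁻¹ * x ^ 2) := by
        rw [← integral_const_mul]
        congr 1 with x
        simp only [gaussianPDFReal, smul_eq_mul, sub_zero]
        ring_nf
    _ = _ := by
        rw [integral_pow_four_mul_exp_neg_mul_sq (by positivity), sqrt_mul (by positivity),
          sqrt_mul zero_le_two, sqrt_inv, sqrt_mul zero_le_two]
        field_simp
        norm_num

variable {Ω : Type*} [MeasurableSpace Ω] {P : Measure Ω} {X Y : Ω → ℝ} {m : ℝ}
  {v w : ℝ≥0}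

lemma HasLaw.integrable_pow_of_gaussianReal (hX : HasLaw X (gaussianReal m v) P) (n : ℕ) :
    Integrable (fun ω => X ω ^ n) P := by
  have h : Integrable (fun x => x ^ n) (P.map X) := hX.map_eq ▸ integrable_pow_gaussianReal m v n
  exact h.comp_aemeasurable hX.aemeasurable

lemma HasLaw.integral_of_gaussianReal (hX : HasLaw X (gaussianReal m v) P) :
    ∫ ω, X ω ∂P = m := by
  rw [hX.integral_eq, integral_id_gaussianReal]

lemma HasLaw.integral_sq_of_gaussianReal (hX : HasLaw X (gaussianReal 0 v) P) :
    ∫ ω, X ω ^ 2 ∂P = v := by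
  rw [← integral_sq_gaussianReal, ← hX.integral_comp (by fun_prop)]
  rfl

lemma HasLaw.integral_pow_four_of_gaussianReal (hX : HasLaw X (gaussianReal 0 v) P) :
    ∫ ω, X ω ^ 4 ∂P = 3 * (v : ℝ) ^ 2 := by
  rw [← integral_pow_four_gaussianReal, ← hX.integral_comp (by fun_prop)]
  rfl

lemma IndepFun.hasLaw_const_mul_add_const_mul_gaussianReal {m₁ m₂ : ℝ} (hXY : IndepFun X Y P)
    (hX : HasLaw X (gaussianReal m₁ v) P) (hY : HasLaw Y (gaussianReal m₂ w) P) (a b : ℝ) :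
    HasLaw (fun ω => a * X ω + b * Y ω) (gaussianReal (a * m₁ + b * m₂)
      (.mk (a ^ 2) (sq_nonneg _) * v + .mk (b ^ 2) (sq_nonneg _) * w)) P := by
  have h := (hXY.comp (measurable_const_mul a) (measurable_const_mul b)).hasLaw_fun_add
    (gaussianReal_const_mul hX a) (gaussianReal_const_mul hY b)
  rwa [gaussianReal_conv_gaussianReal] at h

lemma IndepFun.integrable_pow_mul_pow (hXY : IndepFun X Y P) {p q : ℕ}
    (hX : Integrable (fun ω => X ω ^ p) P) (hY : Integrable (fun ω => Y ω ^ q) P) :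
    Integrable (fun ω => X ω ^ p * Y ω ^ q) P :=
  (hXY.comp (measurable_id.pow_const p) (measurable_id.pow_const q)).integrable_mul hX hY

lemma IndepFun.integral_pow_mul_pow (hXY : IndepFun X Y P) {p q : ℕ}
    (hX : Integrable (fun ω => X ω ^ p) P) (hY : Integrable (fun ω => Y ω ^ q) P) :
    ∫ ω, X ω ^ p * Y ω ^ q ∂P = (∫ ω, X ω ^ p ∂P) * ∫ ω, Y ω ^ q ∂P :=
  (hXY.comp (measurable_id.pow_const p)
    (measurable_id.pow_const q)).integral_fun_mul_eq_mul_integral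
      hX.aestronglyMeasurable hY.aestronglyMeasurable

lemma IndepFun.integrable_sq_mul_sq_const_mul_add (hXY : IndepFun X Y P)
    (hX : HasLaw X (gaussianReal 0 v) P) (hY : HasLaw Y (gaussianReal 0 w) P) (a b : ℝ) :
    Integrable (fun ω => X ω ^ 2 * (a * Y ω + b * X ω) ^ 2) P := by
  have hpow := hX.integrable_pow_of_gaussianReal
  have hmul := fun p q => hXY.integrable_pow_mul_pow (hpow p) (hY.integrable_pow_of_gaussianReal q)
  refine (((hmul 2 2).const_mul (a ^ 2)).fun_add (((hmul 3 1).const_mul (2 * a * b)).fun_add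
    ((hpow 4).const_mul (b ^ 2)))).congr (ae_of_all _ fun ω => ?_)
  ring

lemma IndepFun.integral_sq_mul_sq_const_mul_add (hXY : IndepFun X Y P)
    (hX : HasLaw X (gaussianReal 0 v) P) (hY : HasLaw Y (gaussianReal 0 w) P) (a b : ℝ) :
    ∫ ω, X ω ^ 2 * (a * Y ω + b * X ω) ^ 2 ∂P = (a ^ 2 * w + 3 * b ^ 2 * v) * v := by
  have hpow := hX.integrable_pow_of_gaussianReal
  have hmul := fun p q => hXY.integrable_pow_mul_pow (hpow p) (hY.integrable_pow_of_gaussianReal q)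
  have hY1 : ∫ ω, Y ω ^ 1 ∂P = 0 := by simpa using hY.integral_of_gaussianReal
  calc ∫ ω, X ω ^ 2 * (a * Y ω + b * X ω) ^ 2 ∂P
      = ∫ ω, a ^ 2 * (X ω ^ 2 * Y ω ^ 2) +
          (2 * a * b * (X ω ^ 3 * Y ω ^ 1) + b ^ 2 * X ω ^ 4) ∂P := by
        congr 1 with ω; ring
    _ = a ^ 2 * ∫ ω, X ω ^ 2 * Y ω ^ 2 ∂P + (2 * a * b * ∫ ω, X ω ^ 3 * Y ω ^ 1 ∂P
          + b ^ 2 * ∫ ω, X ω ^ 4 ∂P) := by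
        rw [integral_add ((hmul 2 2).const_mul _)
            (((hmul 3 1).const_mul _).fun_add ((hpow 4).const_mul _)),
          integral_add ((hmul 3 1).const_mul _) ((hpow 4).const_mul _),
          integral_const_mul, integral_const_mul, integral_const_mul]
    _ = (a ^ 2 * w + 3 * b ^ 2 * v) * v := by
        rw [hXY.integral_pow_mul_pow (hpow 3) (hY.integrable_pow_of_gaussianReal 1),
          hXY.integral_pow_mul_pow (hpow 2) (hY.integrable_pow_of_gaussianReal 2),
          hX.integral_pow_four_of_gaussianReal, hX.integral_sq_of_gaussianReal,
          hY.integral_sq_of_gaussianReal, hY1]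
        ring

lemma integral_sum_mul_sum_of_indepFun {ι : Type*} [Fintype ι] {A B : ι → Ω → ℝ}
    {a b c : ℝ}
    (hA : ∀ i, Integrable (A i) P) (hB : ∀ i, Integrable (B i) P)
    (hAB : ∀ i, Integrable (fun ω => A i ω * B i ω) P)
    (hindep : ∀ i j, i ≠ j → IndepFun (A i) (B j) P)
    (ha : ∀ i, ∫ ω, A i ω ∂P = a) (hb : ∀ i, ∫ ω, B i ω ∂P = b)
    (hc : ∀ i, ∫ ω, A i ω * B i ω ∂P = c) :
    ∫ ω, (∑ i, A i ω) * (∑ i, B i ω) ∂P =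
      Fintype.card ι * (c - a * b) + Fintype.card ι * a * (Fintype.card ι * b) := by
  classical
  have hint : ∀ i j, Integrable (fun ω => A i ω * B j ω) P := fun i j => by
    rcases eq_or_ne i j with rfl | hij
    · exact hAB i
    · exact (hindep i j hij).integrable_mul (hA i) (hB j)
  have hterm : ∀ i j, ∫ ω, A i ω * B j ω ∂P = a * b + if i = j then c - a * b else 0 := by
    intro i j
    rcases eq_or_ne i j with rfl | hij
    · simp [hc]
    · rw [(hindep i j hij).integral_fun_mul_eq_mul_integral (hA i).aestronglyMeasurable
        (hB j).aestronglyMeasurable, ha, hb, if_neg hij, add_zero]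
  simp_rw [Finset.sum_mul_sum]
  rw [integral_finsetSum _ fun i _ => integrable_finsetSum _ fun j _ => hint i j]
  simp_rw [integral_finsetSum _ fun j _ => hint _ j, hterm, Finset.sum_add_distrib,
    Fintype.sum_ite_eq, Finset.sum_const, Finset.card_univ, nsmul_eq_mul]
  ring

section GaussianFamily

variable {ι : Type*} [Fintype ι] {U X Y : ι → Ω → ℝ}

lemma integral_sum_sq_of_hasLaw_gaussianReal (hU : ∀ j, HasLaw (U j) (gaussianReal 0 v) P) :
    ∫ ω, ∑ j, U j ω ^ 2 ∂P = Fintype.card ι * v := by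
  rw [integral_finsetSum _ fun j _ => (hU j).integrable_pow_of_gaussianReal 2]
  simp [fun j => (hU j).integral_sq_of_gaussianReal]

lemma integral_sq_sum_sq_of_indepFun (hU : ∀ j, HasLaw (U j) (gaussianReal 0 v) P)
    (hindep : ∀ i j, i ≠ j → IndepFun (U i) (U j) P) :
    ∫ ω, (∑ j, U j ω ^ 2) ^ 2 ∂P =
      Fintype.card ι * (2 * v ^ 2) + Fintype.card ι * v * (Fintype.card ι * v) := by
  have hU2 := fun j => (hU j).integrable_pow_of_gaussianReal 2
  have h := integral_sum_mul_sum_of_indepFun hU2 hU2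
    (fun j => by simpa [← pow_add] using (hU j).integrable_pow_of_gaussianReal 4)
    (fun i j hij => (hindep i j hij).comp (measurable_id.pow_const 2) (measurable_id.pow_const 2))
    (fun j => (hU j).integral_sq_of_gaussianReal) (fun j => (hU j).integral_sq_of_gaussianReal)
    (fun j => by simpa [← pow_add] using (hU j).integral_pow_four_of_gaussianReal)
  simp_rw [sq (∑ j, U j _ ^ 2), h]
  ring

lemma integral_sum_sq_const_mul_add (hX : ∀ j, HasLaw (X j) (gaussianReal 0 v) P)
    (hY : ∀ j, HasLaw (Y j) (gaussianReal 0 w) P) (hXY : ∀ j, IndepFun (X j) (Y j) P)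
    (a b : ℝ) :
    ∫ ω, ∑ j, (a * Y j ω + b * X j ω) ^ 2 ∂P =
      Fintype.card ι * (a ^ 2 * w + b ^ 2 * v) := by
  have hU := fun j => (hXY j).symm.hasLaw_const_mul_add_const_mul_gaussianReal (hY j) (hX j) a b
  simp only [mul_zero, add_zero] at hU
  rw [integral_sum_sq_of_hasLaw_gaussianReal hU]
  push_cast
  ring

lemma integral_sq_sum_sq_const_mul_add (hX : ∀ j, HasLaw (X j) (gaussianReal 0 v) P)
    (hY : ∀ j, HasLaw (Y j) (gaussianReal 0 w) P) (hXY : ∀ j, IndepFun (X j) (Y j) P)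
    (hblock : ∀ i j, i ≠ j →
      IndepFun (fun ω => (X i ω, Y i ω)) (fun ω => (X j ω, Y j ω)) P)
    (a b : ℝ) :
    ∫ ω, (∑ j, (a * Y j ω + b * X j ω) ^ 2) ^ 2 ∂P =
      Fintype.card ι * (2 * (a ^ 2 * w + b ^ 2 * v) ^ 2) +
        Fintype.card ι * (a ^ 2 * w + b ^ 2 * v) *
          (Fintype.card ι * (a ^ 2 * w + b ^ 2 * v)) := by
  have hU := fun j => (hXY j).symm.hasLaw_const_mul_add_const_mul_gaussianReal (hY j) (hX j) a b
  simp only [mul_zero, add_zero] at hU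
  have hφ : Measurable fun p : ℝ × ℝ => a * p.2 + b * p.1 := by fun_prop
  rw [integral_sq_sum_sq_of_indepFun hU fun i j hij => (hblock i j hij).comp hφ hφ]
  push_cast
  ring

lemma integral_sum_sq_mul_sum_sq_const_mul_add (hX : ∀ j, HasLaw (X j) (gaussianReal 0 v) P)
    (hY : ∀ j, HasLaw (Y j) (gaussianReal 0 w) P) (hXY : ∀ j, IndepFun (X j) (Y j) P)
    (hblock : ∀ i j, i ≠ j →
      IndepFun (fun ω => (X i ω, Y i ω)) (fun ω => (X j ω, Y j ω)) P)
    (a b : ℝ) :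
    ∫ ω, (∑ j, X j ω ^ 2) * ∑ j, (a * Y j ω + b * X j ω) ^ 2 ∂P =
      Fintype.card ι * (2 * b ^ 2 * v ^ 2) +
        Fintype.card ι * v * (Fintype.card ι * (a ^ 2 * w + b ^ 2 * v)) := by
  have hU := fun j => (hXY j).symm.hasLaw_const_mul_add_const_mul_gaussianReal (hY j) (hX j) a b
  simp only [mul_zero, add_zero] at hU
  rw [integral_sum_mul_sum_of_indepFun (fun j => (hX j).integrable_pow_of_gaussianReal 2)
    (fun j => (hU j).integrable_pow_of_gaussianReal 2)
    (fun j => (hXY j).integrable_sq_mul_sq_const_mul_add (hX j) (hY j) a b)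
    (fun i j hij => (hblock i j hij).comp (by fun_prop : Measurable fun p : ℝ × ℝ => p.1 ^ 2)
      (by fun_prop : Measurable fun p : ℝ × ℝ => (a * p.2 + b * p.1) ^ 2))
    (fun j => (hX j).integral_sq_of_gaussianReal) (fun j => (hU j).integral_sq_of_gaussianReal)
    (fun j => (hXY j).integral_sq_mul_sq_const_mul_add (hX j) (hY j) a b)]
  push_cast
  ring

end GaussianFamily

end ProbabilityTheory

lemma sum_sq_norm_ofReal_mul_add_ofReal_mul_mul_I {ι : Type*} [Fintype ι] (c : ℝ)
    (x : ι × Bool → ℝ) :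
    ∑ n, ‖(↑(c * x (n, false)) + ↑(c * x (n, true)) * Complex.I : ℂ)‖ ^ 2 =
      c ^ 2 * ∑ j, x j ^ 2 := by
  simp only [Complex.sq_norm, Complex.normSq_add_mul_I, Fintype.sum_prod_type, Fintype.sum_bool,
    Finset.mul_sum]
  exact Finset.sum_congr rfl fun n _ => by ring

theorem stmt_1_general
    {Ωs : Type*} [MeasurableSpace Ωs] (P : Measure Ωs) [IsProbabilityMeasure P]
    (N K : ℕ)
    (σ μ r₀ α : ℝ) (hμ : μ ∈ Set.Ioo (0 : ℝ) 1) (hr : 0 < r₀)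
    (Z : Fin N × Fin (K + 1) × Bool → Ωs → ℝ)
    (hmeas : ∀ p, Measurable (Z p))
    (hindep : iIndepFun Z P)
    (hgauss : ∀ p, Measure.map (Z p) P = gaussianReal 0 (1 / 2))
    (h : Fin N → Fin (K + 1) → Ωs → ℂ)
    (hh0 : ∀ n ω, h n 0 ω = Complex.ofReal (σ * Z (n, 0, false) ω) +
      Complex.ofReal (σ * Z (n, 0, true) ω) * Complex.I)
    (hhk : ∀ n (k : Fin (K + 1)), k ≠ 0 → ∀ ω, h n k ω =
      Complex.ofReal (σ * (Real.sqrt (1 - μ ^ 2) * Z (n, k, false) ω + μ * Z (n, 0, false) ω)) +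
      Complex.ofReal (σ * (Real.sqrt (1 - μ ^ 2) * Z (n, k, true) ω + μ * Z (n, 0, true) ω)) *
        Complex.I)
    (gsq : Fin (K + 1) → Ωs → ℝ)
    (hgsq : ∀ k ω, gsq k ω = r₀ ^ (-α) * ∑ n : Fin N, ‖h n k ω‖ ^ 2) :
    ∀ k : Fin K,
      (∫ ω, gsq 0 ω * gsq k.succ ω ∂P = r₀ ^ (-(2 * α)) * σ ^ 4 * (N * μ ^ 2 + (N : ℝ) ^ 2)) ∧
      (∫ ω, gsq 0 ω ∂P = r₀ ^ (-α) * N * σ ^ 2) ∧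
      (∫ ω, gsq k.succ ω ∂P = r₀ ^ (-α) * N * σ ^ 2) ∧
      ((∫ ω, (gsq 0 ω) ^ 2 ∂P) - (∫ ω, gsq 0 ω ∂P) ^ 2 = r₀ ^ (-(2 * α)) * N * σ ^ 4) ∧
      ((∫ ω, (gsq k.succ ω) ^ 2 ∂P) - (∫ ω, gsq k.succ ω ∂P) ^ 2
        = r₀ ^ (-(2 * α)) * N * σ ^ 4) := by
  intro k
  set s := √(1 - μ ^ 2)
  have hs : s ^ 2 = 1 - μ ^ 2 := sq_sqrt (by nlinarith [hμ.1, hμ.2])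
  let X : Fin N × Bool → Ωs → ℝ := fun j => Z (j.1, 0, j.2)
  let Y : Fin N × Bool → Ωs → ℝ := fun j => Z (j.1, k.succ, j.2)
  have hX : ∀ j, HasLaw (X j) (gaussianReal 0 (1 / 2)) P := fun _ =>
    ⟨(hmeas _).aemeasurable, hgauss _⟩
  have hY : ∀ j, HasLaw (Y j) (gaussianReal 0 (1 / 2)) P := fun _ =>
    ⟨(hmeas _).aemeasurable, hgauss _⟩
  have hXY : ∀ j, IndepFun (X j) (Y j) P := fun j =>
    hindep.indepFun (by simp [Prod.ext_iff, (Fin.succ_ne_zero k).symm])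
  have hblock : ∀ i j, i ≠ j →
      IndepFun (fun ω => (X i ω, Y i ω)) (fun ω => (X j ω, Y j ω)) P := fun i j hij => by
    apply hindep.indepFun_prodMk_prodMk hmeas <;> simp_all [Prod.ext_iff, Fin.succ_ne_zero]
  have hg0 : ∀ ω, gsq 0 ω = r₀ ^ (-α) * σ ^ 2 * ∑ j, X j ω ^ 2 := fun ω => by
    simp_rw [hgsq, hh0, mul_assoc]
    exact congrArg _ (sum_sq_norm_ofReal_mul_add_ofReal_mul_mul_I σ (X · ω))
  have hgk : ∀ ω, gsq k.succ ω = r₀ ^ (-α) * σ ^ 2 * ∑ j, (s * Y j ω + μ * X j ω) ^ 2 :=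
    fun ω => by
      simp_rw [hgsq, hhk _ _ k.succ_ne_zero, mul_assoc]
      exact congrArg _
        (sum_sq_norm_ofReal_mul_add_ofReal_mul_mul_I σ fun j => s * Y j ω + μ * X j ω)
  have hXind : ∀ i j, i ≠ j → IndepFun (X i) (X j) P := fun i j hij =>
    (hblock i j hij).comp measurable_fst measurable_fst
  have hrr : r₀ ^ (-(2 * α)) = (r₀ ^ (-α)) ^ 2 := by
    rw [← rpow_natCast, ← rpow_mul hr.le]; ring_nf
  have hprod : ∀ c a b : ℝ, c * a * (c * b) = c ^ 2 * (a * b) := fun _ _ _ => by ring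
  simp_rw [hg0, hgk, hprod, mul_pow (r₀ ^ (-α) * σ ^ 2)]
  simp only [integral_const_mul, integral_sum_sq_of_hasLaw_gaussianReal hX,
    integral_sum_sq_const_mul_add hX hY hXY, integral_sq_sum_sq_of_indepFun hX hXind,
    integral_sq_sum_sq_const_mul_add hX hY hXY hblock,
    integral_sum_sq_mul_sum_sq_const_mul_add hX hY hXY hblock, Fintype.card_prod,
    Fintype.card_fin, Fintype.card_bool, hrr]
  push_cast [hs]
  refine ⟨?_, ?_, ?_, ?_, ?_⟩ <;> ring

/-- in the correlated signal channel model with MRT precoding, for every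
port `1 ≤ k ≤ K` one has `E[|g₀|²|g_k|²] = r₀^{−2α} σ⁴ (Nμ² + N²)`,
`E[|g₀|²] = E[|g_k|²] = r₀^{−α} N σ²`, and `Var[|g₀|²] = Var[|g_k|²] = r₀^{−2α} N σ⁴`
(variance written as `E[X²] − E[X]²`). -/
theorem stmt_1
    {Ωs : Type*} [MeasurableSpace Ωs] (P : Measure Ωs) [IsProbabilityMeasure P]
    (N K : ℕ) (hN : 1 ≤ N) (hK : 1 ≤ K)
    (σ μ r₀ α : ℝ) (hσ : 0 < σ) (hμ : μ ∈ Set.Ioo (0 : ℝ) 1) (hr : 0 < r₀) (hα : 0 < α)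
    (Z : Fin N × Fin (K + 1) × Bool → Ωs → ℝ)
    (hmeas : ∀ p, Measurable (Z p))
    (hindep : iIndepFun Z P)
    (hgauss : ∀ p, Measure.map (Z p) P = gaussianReal 0 (1 / 2))
    (h : Fin N → Fin (K + 1) → Ωs → ℂ)
    (hh0 : ∀ n ω, h n 0 ω = Complex.ofReal (σ * Z (n, 0, false) ω) +
      Complex.ofReal (σ * Z (n, 0, true) ω) * Complex.I)
    (hhk : ∀ n (k : Fin (K + 1)), k ≠ 0 → ∀ ω, h n k ω =
      Complex.ofReal (σ * (Real.sqrt (1 - μ ^ 2) * Z (n, k, false) ω + μ * Z (n, 0, false) ω)) +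
      Complex.ofReal (σ * (Real.sqrt (1 - μ ^ 2) * Z (n, k, true) ω + μ * Z (n, 0, true) ω)) *
        Complex.I)
    (gsq : Fin (K + 1) → Ωs → ℝ)
    (hgsq : ∀ k ω, gsq k ω = r₀ ^ (-α) * ∑ n : Fin N, ‖h n k ω‖ ^ 2) :
    ∀ k : Fin K,
      (∫ ω, gsq 0 ω * gsq k.succ ω ∂P = r₀ ^ (-(2 * α)) * σ ^ 4 * (N * μ ^ 2 + (N : ℝ) ^ 2)) ∧
      (∫ ω, gsq 0 ω ∂P = r₀ ^ (-α) * N * σ ^ 2) ∧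
      (∫ ω, gsq k.succ ω ∂P = r₀ ^ (-α) * N * σ ^ 2) ∧
      ((∫ ω, (gsq 0 ω) ^ 2 ∂P) - (∫ ω, gsq 0 ω ∂P) ^ 2 = r₀ ^ (-(2 * α)) * N * σ ^ 4) ∧
      ((∫ ω, (gsq k.succ ω) ^ 2 ∂P) - (∫ ω, gsq k.succ ω ∂P) ^ 2
        = r₀ ^ (-(2 * α)) * N * σ ^ 4) :=
  stmt_1_general P N K σ μ r₀ α hμ hr Z hmeas hindep hgauss h hh0 hhk gsq hgsq
end

section
/- Let N ≥ 1 be an integer, ι > 0, Ω ≥ 1/2 a real number, φ > 0, Θ > 0. Let X and Y be independent random variables where X has the Nakagami density with shape N and spread ι, and Y has the Nakagami density with shape Ω and spread φ. Then P(X < ΘY) = ∫₀^∞ [2 Ω^Ω t^{2Ω−1} e^{−Ω t²/φ} / (Γ(Ω) φ^Ω)] · P(N, NΘ²t²/ι) dt, where P(a,x) = (1/Γ(a)) ∫₀^x u^{a−1} e^{−u} du is the regularized lower incomplete gamma function. -/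
open MeasureTheory ProbabilityTheory Real Set

/-- The Nakagami density with shape `m` and spread `Ω`. -/
noncomputable def nakagamiPDF (m Ω τ : ℝ) : ℝ :=
  if 0 < τ then
    2 * m ^ m * τ ^ (2 * m - 1) * Real.exp (-(m * τ ^ 2) / Ω) / (Real.Gamma m * Ω ^ m)
  else 0

/-- The Rayleigh density with power parameter `c`. -/
noncomputable def rayleighPDF (c τ : ℝ) : ℝ :=
  if 0 < τ then 2 * τ / c * Real.exp (-τ ^ 2 / c) else 0

/-- The regularized lower incomplete gamma function `P(a,x) = (1/Γ(a)) ∫₀^x u^{a−1} e^{−u} du`. -/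
noncomputable def regGammaP (a x : ℝ) : ℝ :=
  (∫ u in (0 : ℝ)..x, u ^ (a - 1) * Real.exp (-u)) / Real.Gamma a

/-!
Conditioning on `Y`, independence and Tonelli on the product law give
`P(X < ΘY) = ∫₀^∞ f_Y(t) F_X(Θt) dt`. The substitution `u = m τ² / Ω` turns the Nakagami
density of shape `m` into the `Gamma(m, 1)` density, so the Nakagami CDF is
`F(c) = P(m, m c² / Ω)`.
-/

open scoped ENNReal

lemma integrable_gammaPDFReal {a r : ℝ} (ha : 0 < a) (hr : 0 < r) :
    Integrable (gammaPDFReal a r) :=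
  ⟨(measurable_gammaPDFReal a r).aestronglyMeasurable,
    (hasFiniteIntegral_iff_ofReal (ae_of_all _ (gammaPDFReal_nonneg ha hr))).2 <| by
      simpa [gammaPDF] using (lintegral_gammaPDF_eq_one ha hr).trans_lt ENNReal.one_lt_top⟩

lemma regGammaP_eq_integral_gammaPDFReal (a : ℝ) {x : ℝ} (hx : 0 ≤ x) :
    regGammaP a x = ∫ u in 0..x, gammaPDFReal a 1 u := by
  rw [regGammaP, ← intervalIntegral.integral_div]
  refine intervalIntegral.integral_congr fun u hu => ?_
  rw [uIcc_of_le hx] at hu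
  simp only [gammaPDFReal, if_pos hu.1, one_rpow, one_mul]
  ring

lemma continuousOn_regGammaP {a : ℝ} (ha : 0 < a) : ContinuousOn (regGammaP a) (Ici 0) :=
  (intervalIntegral.continuous_primitive
    (fun _ _ => (integrable_gammaPDFReal ha one_pos).intervalIntegrable) 0).continuousOn.congr
    fun _ hx => regGammaP_eq_integral_gammaPDFReal a hx

lemma regGammaP_nonneg {a x : ℝ} (ha : 0 < a) (hx : 0 ≤ x) : 0 ≤ regGammaP a x := by
  rw [regGammaP_eq_integral_gammaPDFReal a hx]
  exact intervalIntegral.integral_nonneg hx fun u _ => gammaPDFReal_nonneg ha one_pos u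

lemma nakagamiPDF_of_nonpos {m Ω τ : ℝ} (hτ : τ ≤ 0) : nakagamiPDF m Ω τ = 0 :=
  if_neg hτ.not_gt

@[fun_prop]
lemma measurable_nakagamiPDF (m Ω : ℝ) : Measurable (nakagamiPDF m Ω) :=
  Measurable.ite measurableSet_Ioi (by fun_prop) measurable_const

lemma nakagamiPDF_eq_gammaPDFReal_mul {m Ω τ : ℝ} (hm : 0 < m) (hΩ : 0 < Ω) (hτ : 0 ≤ τ) :
    nakagamiPDF m Ω τ = gammaPDFReal m 1 (m * τ ^ 2 / Ω) * (2 * m * τ / Ω) := by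
  rcases hτ.eq_or_lt with rfl | hτ
  · simp [nakagamiPDF]
  have hu : 0 < m * τ ^ 2 / Ω := by positivity
  rw [nakagamiPDF, if_pos hτ, gammaPDFReal, if_pos hu.le, rpow_sub_one hu.ne', one_rpow,
    div_rpow (by positivity) hΩ.le, mul_rpow hm.le (by positivity), rpow_sub_one hτ.ne',
    ← rpow_natCast, ← rpow_mul hτ.le]
  push_cast
  field_simp
  norm_cast

lemma nakagamiPDF_nonneg {m Ω : ℝ} (hm : 0 < m) (hΩ : 0 < Ω) (τ : ℝ) :
    0 ≤ nakagamiPDF m Ω τ := by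
  rcases le_total τ 0 with hτ | hτ
  · rw [nakagamiPDF_of_nonpos hτ]
  · rw [nakagamiPDF_eq_gammaPDFReal_mul hm hΩ hτ]
    exact mul_nonneg (gammaPDFReal_nonneg hm one_pos _) (by positivity)

lemma nakagamiPDF_eqOn_comp_mul_deriv {m Ω c : ℝ} (hm : 0 < m) (hΩ : 0 < Ω) (hc : 0 ≤ c) :
    EqOn (nakagamiPDF m Ω)
      (fun τ => (gammaPDFReal m 1 ∘ fun x => m * x ^ 2 / Ω) τ * (2 * m * τ / Ω))
      (uIcc 0 c) :=
  fun _ hτ => nakagamiPDF_eq_gammaPDFReal_mul hm hΩ (by rw [uIcc_of_le hc] at hτ; exact hτ.1)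

lemma hasDerivAt_mul_sq_div (m Ω x : ℝ) :
    HasDerivAt (fun x => m * x ^ 2 / Ω) (2 * m * x / Ω) x := by
  simpa [mul_comm, mul_left_comm] using ((hasDerivAt_pow 2 x).const_mul m).div_const Ω

lemma intervalIntegrable_nakagamiPDF {m Ω c : ℝ} (hm : 0 < m) (hΩ : 0 < Ω) (hc : 0 ≤ c) :
    IntervalIntegrable (nakagamiPDF m Ω) volume 0 c := by
  refine (intervalIntegrable_congr
    ((nakagamiPDF_eqOn_comp_mul_deriv hm hΩ hc).mono uIoc_subset_uIcc)).2 <|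
    (intervalIntegral.integrable_comp_mul_deriv_iff_of_deriv_nonneg (by fun_prop)
      (fun x _ => hasDerivAt_mul_sq_div m Ω x) fun x hx => ?_).2
      (integrable_gammaPDFReal hm one_pos).intervalIntegrable
  have : 0 ≤ x := (le_min le_rfl hc).trans hx.1.le
  positivity

lemma integral_nakagamiPDF {m Ω c : ℝ} (hm : 0 < m) (hΩ : 0 < Ω) (hc : 0 ≤ c) :
    ∫ τ in 0..c, nakagamiPDF m Ω τ = regGammaP m (m * c ^ 2 / Ω) := by
  rw [intervalIntegral.integral_congr (nakagamiPDF_eqOn_comp_mul_deriv hm hΩ hc),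
    intervalIntegral.integral_comp_mul_deriv_of_deriv_nonneg (by fun_prop)
      (fun x _ => hasDerivAt_mul_sq_div m Ω x) fun x hx => ?_,
    regGammaP_eq_integral_gammaPDFReal m (by positivity)]
  · simp
  · have : 0 ≤ x := (le_min le_rfl hc).trans hx.1.le
    positivity

lemma support_ofReal_nakagamiPDF_subset (m Ω : ℝ) :
    (fun τ => ENNReal.ofReal (nakagamiPDF m Ω τ)).support ⊆ Ioi 0 :=
  fun _ hτ => mem_Ioi.2 <| not_le.1 fun h =>
    hτ (by simp only [nakagamiPDF_of_nonpos h, ENNReal.ofReal_zero])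

lemma withDensity_nakagamiPDF_Iio {m Ω c : ℝ} (hm : 0 < m) (hΩ : 0 < Ω) (hc : 0 ≤ c) :
    volume.withDensity (fun τ => ENNReal.ofReal (nakagamiPDF m Ω τ)) (Iio c)
      = ENNReal.ofReal (regGammaP m (m * c ^ 2 / Ω)) := by
  rw [withDensity_apply _ measurableSet_Iio,
    ← setLIntegral_eq_of_support_subset (support_ofReal_nakagamiPDF_subset m Ω),
    Measure.restrict_restrict measurableSet_Ioi, Ioi_inter_Iio,
    ← ofReal_integral_eq_lintegral_ofReal
      ((intervalIntegrable_nakagamiPDF hm hΩ hc).1.mono_set Ioo_subset_Ioc_self)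
      (ae_of_all _ (nakagamiPDF_nonneg hm hΩ)),
    ← integral_Ioc_eq_integral_Ioo, ← intervalIntegral.integral_of_le hc,
    integral_nakagamiPDF hm hΩ hc]

lemma lintegral_withDensity_nakagamiPDF (m Ω : ℝ) {g : ℝ → ℝ≥0∞} (hg : Measurable g) :
    ∫⁻ y, g y ∂volume.withDensity (fun τ => ENNReal.ofReal (nakagamiPDF m Ω τ))
      = ∫⁻ y in Ioi 0, ENNReal.ofReal (nakagamiPDF m Ω y) * g y := by
  rw [lintegral_withDensity_eq_lintegral_mul _ (by fun_prop) hg,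
    setLIntegral_eq_of_support_subset
      ((Function.support_mul_subset_left _ _).trans (support_ofReal_nakagamiPDF_subset m Ω))]
  rfl

theorem ProbabilityTheory.IndepFun.measure_mem_eq_lintegral {Ω α β : Type*} [MeasurableSpace Ω]
    [MeasurableSpace α] [MeasurableSpace β] {P : Measure Ω} [IsFiniteMeasure P] {X : Ω → α}
    {Y : Ω → β} (hXY : IndepFun X Y P) (hX : Measurable X) (hY : Measurable Y)
    {s : Set (α × β)} (hs : MeasurableSet s) :
    P {ω | (X ω, Y ω) ∈ s} = ∫⁻ y, P.map X {x | (x, y) ∈ s} ∂P.map Y := by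
  calc P {ω | (X ω, Y ω) ∈ s} = P.map (fun ω => (X ω, Y ω)) s :=
        (Measure.map_apply (hX.prodMk hY) hs).symm
    _ = _ := by
      rw [(indepFun_iff_map_prod_eq_prod_map_map hX.aemeasurable hY.aemeasurable).1 hXY,
        Measure.prod_apply_symm hs]
      rfl

/-- if `X` is Nakagami with shape `N` and spread `ι`, `Y` is Nakagami
with shape `Ω ≥ 1/2` and spread `φ`, and `X, Y` are independent, then
`P(X < ΘY) = ∫₀^∞ [2Ω^Ω t^{2Ω−1} e^{−Ωt²/φ}/(Γ(Ω)φ^Ω)] P(N, NΘ²t²/ι) dt`. -/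
theorem stmt_13
    {Ωs : Type*} [MeasurableSpace Ωs] (P : Measure Ωs) [IsProbabilityMeasure P]
    (N : ℕ) (hN : 1 ≤ N) (ι Ω φ Θ : ℝ) (hι : 0 < ι) (hΩ : 1 / 2 ≤ Ω) (hφ : 0 < φ)
    (hΘ : 0 < Θ)
    (X Y : Ωs → ℝ) (hXmeas : Measurable X) (hYmeas : Measurable Y)
    (hX : Measure.map X P = volume.withDensity (fun τ => ENNReal.ofReal (nakagamiPDF N ι τ)))
    (hY : Measure.map Y P = volume.withDensity (fun τ => ENNReal.ofReal (nakagamiPDF Ω φ τ)))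
    (hXY : IndepFun X Y P) :
    (P {ω | X ω < Θ * Y ω}).toReal =
      ∫ t in Set.Ioi (0 : ℝ),
        (2 * Ω ^ Ω * t ^ (2 * Ω - 1) * Real.exp (-(Ω * t ^ 2) / φ) /
          (Real.Gamma Ω * φ ^ Ω)) * regGammaP N (N * Θ ^ 2 * t ^ 2 / ι) := by
  have hN₀ : (0 : ℝ) < N := by exact_mod_cast hN
  have hΩ₀ : 0 < Ω := by linarith
  set R : ℝ → ℝ := fun t => regGammaP N (N * Θ ^ 2 * t ^ 2 / ι)
  have hR : Continuous R :=
    (continuousOn_regGammaP hN₀).comp_continuous (by fun_prop) fun _ => mem_Ici.2 (by positivity)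
  have hcdf : ∀ t ∈ Ioi (0 : ℝ), ENNReal.ofReal (nakagamiPDF Ω φ t) * P.map X (Iio (Θ * t))
      = ENNReal.ofReal (nakagamiPDF Ω φ t * R t) := fun t ht => by
    rw [hX, withDensity_nakagamiPDF_Iio hN₀ hι (mul_pos hΘ ht).le,
      ← ENNReal.ofReal_mul (nakagamiPDF_nonneg hΩ₀ hφ t), mul_pow, ← mul_assoc]
  have hmono : Monotone fun c => P.map X (Iio c) := fun _ _ h => measure_mono (Iio_subset_Iio h)
  have hmeas : Measurable fun y => P.map X (Iio (Θ * y)) :=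
    hmono.measurable.comp (measurable_const_mul Θ)
  calc (P {ω | X ω < Θ * Y ω}).toReal
        = (∫⁻ y, P.map X (Iio (Θ * y)) ∂P.map Y).toReal := by
        congr 1
        exact hXY.measure_mem_eq_lintegral hXmeas hYmeas
          (measurableSet_lt measurable_fst (measurable_snd.const_mul Θ))
    _ = (∫⁻ t in Ioi 0, ENNReal.ofReal (nakagamiPDF Ω φ t * R t)).toReal := by
        rw [hY, lintegral_withDensity_nakagamiPDF Ω φ hmeas,
          setLIntegral_congr_fun measurableSet_Ioi hcdf]
    _ = ∫ t in Ioi 0, nakagamiPDF Ω φ t * R t :=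
        (integral_eq_lintegral_of_nonneg_ae
          (ae_of_all _ fun t =>
            mul_nonneg (nakagamiPDF_nonneg hΩ₀ hφ t) (regGammaP_nonneg hN₀ (by positivity)))
          ((measurable_nakagamiPDF Ω φ).mul hR.measurable).aestronglyMeasurable).symm
    _ = _ := setIntegral_congr_fun measurableSet_Ioi fun t ht => by
        rw [nakagamiPDF, if_pos (mem_Ioi.1 ht)]
end

section
/- The function Ω ↦ √Ω · Γ(Ω) / Γ(Ω + 1/2) is strictly decreasing on (0, ∞), where Γ is the Gamma function. Consequently, the ratio of the mean f-FAMA interference magnitude to the mean s-FAMA interference magnitude, (√π/2) · √Ω · Γ(Ω)/Γ(Ω + 1/2), is strictly decreasing in the shape parameter Ω. -/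
/-!
Substituting `x = t ^ Ω` in the Beta integral `B(Ω, 1/2) = ∫₀¹ t^(Ω-1) (1-t)^(-1/2) dt` gives
`√π · √Ω Γ(Ω) / Γ(Ω + 1/2) = √Ω · B(Ω, 1/2) = ∫₀¹ (Ω (1 - x^(1/Ω)))^(-1/2) dx`.
For fixed `x ∈ (0, 1)`, `Ω (1 - x^(1/Ω))` is `-log x` times the slope of the secant of `exp`
between `0` and `log x / Ω`, so it strictly increases with `Ω` by strict convexity of `exp`;
hence the integrand, and with it the integral, strictly decreases.
-/

open Real Set MeasureTheory

theorem setIntegral_lt_setIntegral_of_forall_lt {α : Type*} [MeasurableSpace α] {μ : Measure α}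
    {s : Set α} {f g : α → ℝ} (hs : MeasurableSet s) (hμs : μ s ≠ 0)
    (hf : IntegrableOn f s μ) (hg : IntegrableOn g s μ) (hlt : ∀ x ∈ s, f x < g x) :
    ∫ x in s, f x ∂μ < ∫ x in s, g x ∂μ := by
  rw [← sub_pos, ← integral_sub hg hf, setIntegral_pos_iff_support_of_nonneg_ae
    ((ae_restrict_iff' hs).2 (ae_of_all _ fun x hx => (sub_pos.2 (hlt x hx)).le)) (hg.sub hf)]
  refine (pos_iff_ne_zero.2 hμs).trans_le (measure_mono fun x hx => ⟨?_, hx⟩)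
  exact (sub_pos.2 (hlt x hx)).ne'

theorem ofReal_rpow_mul_one_sub_rpow {a b t : ℝ} (ht : t ∈ Ioo (0 : ℝ) 1) :
    ((t ^ (a - 1) * (1 - t) ^ (b - 1) : ℝ) : ℂ) =
      (t : ℂ) ^ ((a : ℂ) - 1) * (1 - (t : ℂ)) ^ ((b : ℂ) - 1) := by
  rw [Complex.ofReal_mul, Complex.ofReal_cpow ht.1.le, Complex.ofReal_cpow (sub_pos.2 ht.2).le]
  push_cast
  rfl

theorem integrableOn_rpow_mul_one_sub_rpow {a b : ℝ} (ha : 0 < a) (hb : 0 < b) :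
    IntegrableOn (fun t : ℝ => t ^ (a - 1) * (1 - t) ^ (b - 1)) (Ioo 0 1) := by
  have h := (Complex.betaIntegral_convergent (u := a) (v := b) (by simpa) (by simpa)).1.mono_set
    Ioo_subset_Ioc_self
  refine IntegrableOn.congr_fun h.re (fun t ht => ?_) measurableSet_Ioo
  rw [← ofReal_rpow_mul_one_sub_rpow ht, RCLike.re_to_complex, Complex.ofReal_re]

theorem integral_rpow_mul_one_sub_rpow {a b : ℝ} (ha : 0 < a) (hb : 0 < b) :
    ∫ t in Ioo (0 : ℝ) 1, t ^ (a - 1) * (1 - t) ^ (b - 1) =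
      Gamma a * Gamma b / Gamma (a + b) := by
  have h := Complex.betaIntegral_eq_Gamma_mul_div a b (by simpa) (by simpa)
  rw [Complex.betaIntegral, intervalIntegral.integral_of_le zero_le_one,
    integral_Ioc_eq_integral_Ioo, ← setIntegral_congr_fun measurableSet_Ioo
      (fun t ht => ofReal_rpow_mul_one_sub_rpow (a := a) (b := b) ht), integral_complex_ofReal,
    ← Complex.ofReal_add, Complex.Gamma_ofReal, Complex.Gamma_ofReal, Complex.Gamma_ofReal] at h
  exact_mod_cast h

theorem rpow_image_Ioo_zero_one {c : ℝ} (hc : 0 < c) : (· ^ c) '' Ioo (0 : ℝ) 1 = Ioo 0 1 := by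
  refine Subset.antisymm ?_ fun x hx => ⟨x ^ c⁻¹, ?_, rpow_inv_rpow hx.1.le hc.ne'⟩
  · rintro _ ⟨t, ht, rfl⟩
    exact ⟨rpow_pos_of_pos ht.1 c, rpow_lt_one ht.1.le ht.2 hc⟩
  · exact ⟨rpow_pos_of_pos hx.1 _, rpow_lt_one hx.1.le hx.2 (inv_pos.2 hc)⟩

theorem hasDerivWithinAt_rpow_Ioo_zero_one {c t : ℝ} (ht : t ∈ Ioo (0 : ℝ) 1) :
    HasDerivWithinAt (· ^ c) (c * t ^ (c - 1)) (Ioo 0 1) t :=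
  (hasDerivAt_rpow_const (Or.inl ht.1.ne')).hasDerivWithinAt

theorem injOn_rpow_Ioo_zero_one {c : ℝ} (hc : 0 < c) : InjOn (· ^ c) (Ioo (0 : ℝ) 1) :=
  fun _ hs _ ht h => rpow_left_injOn hc.ne' hs.1.le ht.1.le h

theorem integrableOn_Ioo_zero_one_iff_comp_rpow {c : ℝ} (hc : 0 < c) (g : ℝ → ℝ) :
    IntegrableOn g (Ioo 0 1) ↔
      IntegrableOn (fun t => c * t ^ (c - 1) * g (t ^ c)) (Ioo 0 1) := by
  conv_lhs => rw [← rpow_image_Ioo_zero_one hc]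
  rw [integrableOn_image_iff_integrableOn_abs_deriv_smul measurableSet_Ioo
    (fun t ht => hasDerivWithinAt_rpow_Ioo_zero_one ht) (injOn_rpow_Ioo_zero_one hc)]
  refine integrableOn_congr_fun (fun t ht => ?_) measurableSet_Ioo
  rw [smul_eq_mul, abs_of_pos (mul_pos hc (rpow_pos_of_pos ht.1 _))]

theorem integral_Ioo_zero_one_eq_integral_comp_rpow {c : ℝ} (hc : 0 < c) (g : ℝ → ℝ) :
    ∫ x in Ioo (0 : ℝ) 1, g x = ∫ t in Ioo (0 : ℝ) 1, c * t ^ (c - 1) * g (t ^ c) := by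
  conv_lhs => rw [← rpow_image_Ioo_zero_one hc]
  rw [integral_image_eq_integral_abs_deriv_smul measurableSet_Ioo
    (fun t ht => hasDerivWithinAt_rpow_Ioo_zero_one ht) (injOn_rpow_Ioo_zero_one hc)]
  refine setIntegral_congr_fun measurableSet_Ioo (fun t ht => ?_)
  rw [smul_eq_mul, abs_of_pos (mul_pos hc (rpow_pos_of_pos ht.1 _))]

theorem strictMonoOn_mul_one_sub_rpow_inv {x : ℝ} (hx₀ : 0 < x) (hx₁ : x < 1) :
    StrictMonoOn (fun c : ℝ => c * (1 - x ^ (1 / c))) (Ioi 0) := by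
  intro a (ha : 0 < a) b (hb : 0 < b) hab
  have hL : log x < 0 := log_neg hx₀ hx₁
  have secant (c : ℝ) (hc : 0 < c) : c * (1 - x ^ (1 / c)) =
      -log x * ((exp (log x / c) - exp 0) / (log x / c - 0)) := by
    rw [rpow_def_of_pos hx₀, exp_zero]
    field_simp [hL.ne]
    ring
  have hslope := strictConvexOn_exp.secant_strict_mono (mem_univ 0) (mem_univ (log x / a))
    (mem_univ (log x / b)) (div_ne_zero hL.ne ha.ne') (div_ne_zero hL.ne hb.ne')
    (by rw [div_lt_div_iff₀ ha hb]; nlinarith)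
  simp only [secant a ha, secant b hb]
  exact mul_lt_mul_of_pos_left hslope (neg_pos.2 hL)

theorem mul_rpow_sub_one_mul_rpow_neg_half_comp_rpow {c t : ℝ} (hc : 0 < c)
    (ht : t ∈ Ioo (0 : ℝ) 1) :
    c * t ^ (c - 1) * (c * (1 - (t ^ c) ^ (1 / c))) ^ (-(1 / 2) : ℝ) =
      √c * (t ^ (c - 1) * (1 - t) ^ ((1 / 2 : ℝ) - 1)) := by
  rw [← rpow_mul ht.1.le, mul_one_div_cancel hc.ne', rpow_one,
    mul_rpow hc.le (sub_pos.2 ht.2).le, sqrt_eq_rpow]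
  have hpow : c * c ^ (-(1 / 2) : ℝ) = c ^ (1 / 2 : ℝ) := by
    conv_lhs => enter [1]; rw [← rpow_one c]
    rw [← rpow_add hc]
    norm_num
  rw [show (1 / 2 : ℝ) - 1 = -(1 / 2) by norm_num, ← hpow]
  ring

theorem integrableOn_mul_one_sub_rpow_inv_rpow_neg_half {c : ℝ} (hc : 0 < c) :
    IntegrableOn (fun x : ℝ => (c * (1 - x ^ (1 / c))) ^ (-(1 / 2) : ℝ)) (Ioo 0 1) := by
  rw [integrableOn_Ioo_zero_one_iff_comp_rpow hc]
  refine IntegrableOn.congr_fun ?_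
    (fun t ht => (mul_rpow_sub_one_mul_rpow_neg_half_comp_rpow hc ht).symm) measurableSet_Ioo
  exact (integrableOn_rpow_mul_one_sub_rpow hc one_half_pos).const_mul _

theorem integral_mul_one_sub_rpow_inv_rpow_neg_half {c : ℝ} (hc : 0 < c) :
    ∫ x in Ioo (0 : ℝ) 1, (c * (1 - x ^ (1 / c))) ^ (-(1 / 2) : ℝ) =
      √π * (√c * Gamma c / Gamma (c + 1 / 2)) := by
  rw [integral_Ioo_zero_one_eq_integral_comp_rpow hc,
    setIntegral_congr_fun measurableSet_Ioo
      (fun t ht => mul_rpow_sub_one_mul_rpow_neg_half_comp_rpow hc ht),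
    integral_const_mul, integral_rpow_mul_one_sub_rpow hc one_half_pos, Gamma_one_half_eq]
  ring

theorem strictAntiOn_sqrt_mul_Gamma_div_Gamma_add_half :
    StrictAntiOn (fun c : ℝ => √c * Gamma c / Gamma (c + 1 / 2)) (Ioi 0) := by
  intro a (ha : 0 < a) b (hb : 0 < b) hab
  have hlt : ∫ x in Ioo (0 : ℝ) 1, (b * (1 - x ^ (1 / b))) ^ (-(1 / 2) : ℝ) <
      ∫ x in Ioo (0 : ℝ) 1, (a * (1 - x ^ (1 / a))) ^ (-(1 / 2) : ℝ) :=
    setIntegral_lt_setIntegral_of_forall_lt measurableSet_Ioo (by simp)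
      (integrableOn_mul_one_sub_rpow_inv_rpow_neg_half hb)
      (integrableOn_mul_one_sub_rpow_inv_rpow_neg_half ha) fun x hx =>
        rpow_lt_rpow_of_neg (mul_pos ha (sub_pos.2 (rpow_lt_one hx.1.le hx.2 (by positivity))))
          (strictMonoOn_mul_one_sub_rpow_inv hx.1 hx.2 ha hb hab) (by norm_num)
  rw [integral_mul_one_sub_rpow_inv_rpow_neg_half ha,
    integral_mul_one_sub_rpow_inv_rpow_neg_half hb] at hlt
  exact lt_of_mul_lt_mul_left hlt (sqrt_nonneg π)

/-- the function `Ω ↦ √Ω · Γ(Ω)/Γ(Ω + 1/2)` is strictly decreasing on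
`(0,∞)`; consequently the ratio of mean interference magnitudes
`(√π/2) · √Ω · Γ(Ω)/Γ(Ω + 1/2)` is strictly decreasing in `Ω` on `(0,∞)`. -/
theorem stmt_16 :
    StrictAntiOn (fun Ω : ℝ => Real.sqrt Ω * Real.Gamma Ω / Real.Gamma (Ω + 1 / 2))
      (Set.Ioi 0) ∧
    StrictAntiOn (fun Ω : ℝ =>
      (Real.sqrt π / 2) * (Real.sqrt Ω * Real.Gamma Ω / Real.Gamma (Ω + 1 / 2)))
      (Set.Ioi 0) :=
  ⟨strictAntiOn_sqrt_mul_Gamma_div_Gamma_add_half, fun _ ha _ hb hab =>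
    mul_lt_mul_of_pos_left (strictAntiOn_sqrt_mul_Gamma_div_Gamma_add_half ha hb hab)
      (by positivity)⟩
end
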